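/- arXiv:2412.02604 — 3 statements merged into one kernel-verified Lean document; each statement's English description precedes it below -/
import Mathlib

section
/- Define λ1 := max over subsets B with Sp ⊊ B ⊆ V of (ρ(B) − ρ(Sp)) / (1 − np/|B|), and λ2 := max over subsets B with ∅ ⊊ B ⊊ Sp of (ρ(B) − ρ(Sp)) / (np/|B| − 1). Then for every λ ≥ max{λ1, λ2}, the protected subset Sp is a maximizer of the FADSG-II objective: for every nonempty S ⊆ V, h(S, λ) ≤ h(Sp, λ) = ρ(Sp). -/
open Finset

/-- Number of edges of `G` with both endpoints in `S`. -/
def edgesIn {V : Type*} [Fintype V] [DecidableEq V] (G : SimpleGraph V)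
    [DecidableRel G.Adj] (S : Finset V) : ℕ :=
  (G.edgeFinset.filter (fun e => ∀ v ∈ e, v ∈ S)).card

/-- Density `ρ(S) = 2 e(S) / |S|` of the subgraph induced by `S`. -/
noncomputable def rho {V : Type*} [Fintype V] [DecidableEq V] (G : SimpleGraph V)
    [DecidableRel G.Adj] (S : Finset V) : ℝ :=
  2 * (edgesIn G S : ℝ) / S.card

/-- Fairness regularizer `r2(S) = (|S| + |Sp| - 2|S ∩ Sp|) / |S|`. -/
noncomputable def r2 {V : Type*} [DecidableEq V] (Sp S : Finset V) : ℝ :=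
  ((S.card : ℝ) + (Sp.card : ℝ) - 2 * ((S ∩ Sp).card : ℝ)) / S.card

/-- FADSG-II objective `h(S, λ) = ρ(S) - λ r2(S)`. -/
noncomputable def fadsg2 {V : Type*} [Fintype V] [DecidableEq V] (G : SimpleGraph V)
    [DecidableRel G.Adj] (Sp S : Finset V) (lam : ℝ) : ℝ :=
  rho G S - lam * r2 Sp S

/-- Submodularity-type inequality for edge counts. -/
lemma edgesIn_add_le {V : Type*} [Fintype V] [DecidableEq V] (G : SimpleGraph V)
    [DecidableRel G.Adj] (S T : Finset V) :
    edgesIn G S + edgesIn G T ≤ edgesIn G (S ∪ T) + edgesIn G (S ∩ T) := by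
  unfold edgesIn
  have key := Finset.card_union_add_card_inter
    (G.edgeFinset.filter (fun e => ∀ v ∈ e, v ∈ S))
    (G.edgeFinset.filter (fun e => ∀ v ∈ e, v ∈ T))
  have hsub : (G.edgeFinset.filter (fun e => ∀ v ∈ e, v ∈ S)) ∪
      (G.edgeFinset.filter (fun e => ∀ v ∈ e, v ∈ T)) ⊆
      G.edgeFinset.filter (fun e => ∀ v ∈ e, v ∈ S ∪ T) := by
    intro e he
    rcases Finset.mem_union.mp he with h | h <;>
    · rw [Finset.mem_filter] at h ⊢
      exact ⟨h.1, fun v hv => by simp [h.2 v hv]⟩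
  have hinter : (G.edgeFinset.filter (fun e => ∀ v ∈ e, v ∈ S)) ∩
      (G.edgeFinset.filter (fun e => ∀ v ∈ e, v ∈ T)) =
      G.edgeFinset.filter (fun e => ∀ v ∈ e, v ∈ S ∩ T) := by
    ext e
    simp only [Finset.mem_inter, Finset.mem_filter, forall_and]
    tauto
  calc (G.edgeFinset.filter (fun e => ∀ v ∈ e, v ∈ S)).card +
        (G.edgeFinset.filter (fun e => ∀ v ∈ e, v ∈ T)).card
      = ((G.edgeFinset.filter (fun e => ∀ v ∈ e, v ∈ S)) ∪
         (G.edgeFinset.filter (fun e => ∀ v ∈ e, v ∈ T))).card +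
        ((G.edgeFinset.filter (fun e => ∀ v ∈ e, v ∈ S)) ∩
         (G.edgeFinset.filter (fun e => ∀ v ∈ e, v ∈ T))).card := key.symm
    _ ≤ _ := by
        rw [hinter]
        exact Nat.add_le_add_right (Finset.card_le_card hsub) _

/-- with `λ1 := max_{Sp ⊊ B ⊆ V} (ρ(B) - ρ(Sp)) / (1 - np/|B|)` and
`λ2 := max_{∅ ⊊ B ⊊ Sp} (ρ(B) - ρ(Sp)) / (np/|B| - 1)`, for every
`λ ≥ max {λ1, λ2}`, the protected subset `Sp` maximizes the FADSG-II objective,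
with optimal value `ρ(Sp)`. -/
theorem stmt5 {V : Type*} [Fintype V] [DecidableEq V] (G : SimpleGraph V)
    [DecidableRel G.Adj] (Sp : Finset V) (hSp : Sp.Nonempty) (hSpV : Sp ≠ Finset.univ)
    (lam : ℝ) (hlam0 : 0 ≤ lam)
    (hlam : max
        (sSup {x : ℝ | ∃ B : Finset V, Sp ⊂ B ∧
          (rho G B - rho G Sp) / (1 - (Sp.card : ℝ) / B.card) = x})
        (sSup {x : ℝ | ∃ B : Finset V, B.Nonempty ∧ B ⊂ Sp ∧
          (rho G B - rho G Sp) / ((Sp.card : ℝ) / B.card - 1) = x}) ≤ lam) :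
    (∀ S : Finset V, S.Nonempty → fadsg2 G Sp S lam ≤ fadsg2 G Sp Sp lam) ∧
    fadsg2 G Sp Sp lam = rho G Sp := by
  have hnp : (0:ℝ) < (Sp.card : ℝ) := by exact_mod_cast Finset.card_pos.mpr hSp
  have hr2Sp : r2 Sp Sp = 0 := by
    simp only [r2, Finset.inter_self]
    rw [show ((Sp.card : ℝ) + (Sp.card : ℝ) - 2 * (Sp.card : ℝ)) = 0 by ring, zero_div]
  have hval : fadsg2 G Sp Sp lam = rho G Sp := by simp [fadsg2, hr2Sp]
  have hSpmul : rho G Sp * (Sp.card : ℝ) = 2 * (edgesIn G Sp : ℝ) := by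
    rw [rho]; field_simp
  -- bounded-above facts for the two sup sets
  have hbdd1 : BddAbove {x : ℝ | ∃ B : Finset V, Sp ⊂ B ∧
      (rho G B - rho G Sp) / (1 - (Sp.card : ℝ) / B.card) = x} := by
    apply Set.Finite.bddAbove
    apply (Set.finite_range (fun B : Finset V =>
      (rho G B - rho G Sp) / (1 - (Sp.card : ℝ) / B.card))).subset
    rintro x ⟨B, _, h⟩; exact ⟨B, h⟩
  have hbdd2 : BddAbove {x : ℝ | ∃ B : Finset V, B.Nonempty ∧ B ⊂ Sp ∧
      (rho G B - rho G Sp) / ((Sp.card : ℝ) / B.card - 1) = x} := by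
    apply Set.Finite.bddAbove
    apply (Set.finite_range (fun B : Finset V =>
      (rho G B - rho G Sp) / ((Sp.card : ℝ) / B.card - 1))).subset
    rintro x ⟨B, _, _, h⟩; exact ⟨B, h⟩
  refine ⟨?_, hval⟩
  intro S hS
  rw [hval]
  set A := S ∪ Sp with hA
  set C := S ∩ Sp with hC
  have hScard : (0:ℝ) < (S.card : ℝ) := by exact_mod_cast Finset.card_pos.mpr hS
  have hcard : (A.card : ℝ) + (C.card : ℝ) = (S.card : ℝ) + (Sp.card : ℝ) := by
    exact_mod_cast congrArg (Nat.cast : ℕ → ℝ)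
      (Finset.card_union_add_card_inter S Sp)
  -- bound on the union
  have h1 : 2 * (edgesIn G A : ℝ) ≤ rho G Sp * (A.card : ℝ)
      + lam * ((A.card : ℝ) - (Sp.card : ℝ)) := by
    by_cases hAe : A = Sp
    · rw [hAe, hSpmul, show ((Sp.card : ℝ) - (Sp.card : ℝ)) = 0 by ring, mul_zero, add_zero]
    · have hAss : Sp ⊂ A := (Finset.subset_union_right).ssubset_of_ne (Ne.symm hAe)
      have hAcard : (Sp.card : ℝ) < (A.card : ℝ) := by
        exact_mod_cast Finset.card_lt_card hAss
      have hApos : (0:ℝ) < (A.card : ℝ) := lt_trans hnp hAcard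
      have hden : (0:ℝ) < 1 - (Sp.card : ℝ) / (A.card : ℝ) := by
        rw [sub_pos, div_lt_one hApos]; exact hAcard
      have hmem : (rho G A - rho G Sp) / (1 - (Sp.card : ℝ) / A.card) ∈
          {x : ℝ | ∃ B : Finset V, Sp ⊂ B ∧
            (rho G B - rho G Sp) / (1 - (Sp.card : ℝ) / B.card) = x} := ⟨A, hAss, rfl⟩
      have hle : (rho G A - rho G Sp) / (1 - (Sp.card : ℝ) / A.card) ≤ lam :=
        le_trans (le_trans (le_csSup hbdd1 hmem) (le_max_left _ _)) hlam
      have h2 : rho G A - rho G Sp ≤ lam * (1 - (Sp.card : ℝ) / A.card) :=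
        (div_le_iff₀ hden).mp hle
      have h3 : (rho G A - rho G Sp) * (A.card : ℝ) ≤
          lam * (1 - (Sp.card : ℝ) / A.card) * (A.card : ℝ) :=
        mul_le_mul_of_nonneg_right h2 (le_of_lt hApos)
      have e1 : rho G A * (A.card : ℝ) = 2 * (edgesIn G A : ℝ) := by
        rw [rho]; field_simp
      have e2 : lam * (1 - (Sp.card : ℝ) / A.card) * (A.card : ℝ) =
          lam * ((A.card : ℝ) - (Sp.card : ℝ)) := by field_simp
      nlinarith [h3]
  -- bound on the intersection
  have h2 : 2 * (edgesIn G C : ℝ) ≤ rho G Sp * (C.card : ℝ)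
      + lam * ((Sp.card : ℝ) - (C.card : ℝ)) := by
    by_cases hCe : C = ∅
    · have hzero : edgesIn G C = 0 := by
        rw [hCe, edgesIn, Finset.card_eq_zero, Finset.filter_eq_empty_iff]
        intro e _
        induction e using Sym2.ind with
        | _ a b =>
          push_neg
          exact ⟨a, Sym2.mem_mk_left a b, Finset.notMem_empty a⟩
      have hc0 : (C.card : ℝ) = 0 := by rw [hCe]; simp
      rw [hzero, hc0]
      have : (0:ℝ) ≤ lam * (Sp.card : ℝ) := mul_nonneg hlam0 (le_of_lt hnp)
      simpa using this
    · by_cases hCSp : C = Sp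
      · rw [hCSp, hSpmul, show ((Sp.card : ℝ) - (Sp.card : ℝ)) = 0 by ring, mul_zero, add_zero]
      · have hCne : C.Nonempty := Finset.nonempty_of_ne_empty hCe
        have hCss : C ⊂ Sp := (Finset.inter_subset_right).ssubset_of_ne hCSp
        have hCcard : (C.card : ℝ) < (Sp.card : ℝ) := by
          exact_mod_cast Finset.card_lt_card hCss
        have hCpos : (0:ℝ) < (C.card : ℝ) := by
          exact_mod_cast Finset.card_pos.mpr hCne
        have hden : (0:ℝ) < (Sp.card : ℝ) / (C.card : ℝ) - 1 := by
          rw [sub_pos, lt_div_iff₀ hCpos, one_mul]; exact hCcard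
        have hmem : (rho G C - rho G Sp) / ((Sp.card : ℝ) / C.card - 1) ∈
            {x : ℝ | ∃ B : Finset V, B.Nonempty ∧ B ⊂ Sp ∧
              (rho G B - rho G Sp) / ((Sp.card : ℝ) / B.card - 1) = x} :=
          ⟨C, hCne, hCss, rfl⟩
        have hle : (rho G C - rho G Sp) / ((Sp.card : ℝ) / C.card - 1) ≤ lam :=
          le_trans (le_trans (le_csSup hbdd2 hmem) (le_max_right _ _)) hlam
        have hb : rho G C - rho G Sp ≤ lam * ((Sp.card : ℝ) / C.card - 1) :=
          (div_le_iff₀ hden).mp hle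
        have h3 : (rho G C - rho G Sp) * (C.card : ℝ) ≤
            lam * ((Sp.card : ℝ) / C.card - 1) * (C.card : ℝ) :=
          mul_le_mul_of_nonneg_right hb (le_of_lt hCpos)
        have e1 : rho G C * (C.card : ℝ) = 2 * (edgesIn G C : ℝ) := by
          rw [rho]; field_simp
        have e2 : lam * ((Sp.card : ℝ) / C.card - 1) * (C.card : ℝ) =
            lam * ((Sp.card : ℝ) - (C.card : ℝ)) := by field_simp
        nlinarith [h3]
  -- edge submodularity
  have hedge : (edgesIn G S : ℝ) + (edgesIn G Sp : ℝ) ≤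
      (edgesIn G A : ℝ) + (edgesIn G C : ℝ) := by
    exact_mod_cast edgesIn_add_le G S Sp
  -- combine the lambda terms
  have hlin : lam * ((A.card : ℝ) - (Sp.card : ℝ)) + lam * ((Sp.card : ℝ) - (C.card : ℝ)) =
      lam * ((S.card : ℝ) + (Sp.card : ℝ) - 2 * (C.card : ℝ)) := by
    have hA' : (A.card : ℝ) = (S.card : ℝ) + (Sp.card : ℝ) - (C.card : ℝ) := by linarith
    rw [hA']; ring
  have hmain : 2 * (edgesIn G S : ℝ) ≤ rho G Sp * (S.card : ℝ)
      + lam * ((S.card : ℝ) + (Sp.card : ℝ) - 2 * (C.card : ℝ)) := by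
    nlinarith [h1, h2, hedge, hSpmul, hlin, hcard]
  -- conclude
  have hS0 : (S.card : ℝ) ≠ 0 := ne_of_gt hScard
  have hfin : fadsg2 G Sp S lam =
      (2 * (edgesIn G S : ℝ) - lam * ((S.card : ℝ) + (Sp.card : ℝ) - 2 * ((C.card : ℝ)))) /
        (S.card : ℝ) := by
    rw [fadsg2, rho, r2, ← hC]
    field_simp
  rw [hfin, div_le_iff₀ hScard]
  linarith [hmain]
end

section
/- Let n = k² be a perfect square with n > 9 (so k ≥ 4). In the lollipop graph L_n, every nonempty vertex subset S satisfies ρ(S) ≤ k − 1 = √n − 1, and equality is attained by the vertex set of the clique C_√n; i.e., the densest subgraph of L_n is the unprotected clique C_√n and ρ*_{L_n} = √n − 1. -/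
/-!
Split the edges inside `S` into those inside the clique part `S ∩ C`, at most `a (a - 1) / 2`
of them with `a = |S ∩ C| ≤ k`, and the path edges, which inject into `S \ C` via their larger
endpoint. Hence `2 e(S) ≤ a (a - 1) + 2 b ≤ (k - 1) (a + b)` with `b = |S \ C|` as soon as
`k ≥ 3`, while the clique `C` itself has density exactly `k - 1`.
-/

open Finset

/-- Fairness regularizer `r1(S) = |S ∩ Sp| / |S|`. -/
noncomputable def r1 {V : Type*} [DecidableEq V] (Sp S : Finset V) : ℝ :=
  ((S ∩ Sp).card : ℝ) / S.card

/-- The lollipop graph `L_n` on `n = k²` vertices: vertices `0, …, k-1` form a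
clique (the unprotected vertices), vertices `k, …, k²-1` form a path (the
protected vertices), and one endpoint of the path (vertex `k`) is joined to
one vertex of the clique (vertex `k-1`). -/
def lollipop (k : ℕ) : SimpleGraph (Fin (k * k)) where
  Adj u v := u ≠ v ∧ ((u.val < k ∧ v.val < k) ∨
      (u.val + 1 = v.val ∧ k ≤ v.val) ∨ (v.val + 1 = u.val ∧ k ≤ u.val))
  symm := by
    constructor
    intro u v h
    refine ⟨Ne.symm h.1, ?_⟩
    rcases h.2 with h | h | h
    · exact Or.inl ⟨h.2, h.1⟩
    · exact Or.inr (Or.inr h)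
    · exact Or.inr (Or.inl h)
  loopless := by constructor; intro v h; exact h.1 rfl

instance lollipopDecAdj (k : ℕ) : DecidableRel (lollipop k).Adj :=
  fun _ _ => inferInstanceAs (Decidable (_ ∧ _))

/-- The protected subset of the lollipop graph: the vertices of the path. -/
def lollipopProtected (k : ℕ) : Finset (Fin (k * k)) :=
  Finset.univ.filter (fun v => k ≤ v.val)

/-- The vertex set of the clique `C_√n` in the lollipop graph. -/
def lollipopClique (k : ℕ) : Finset (Fin (k * k)) :=
  Finset.univ.filter (fun v => v.val < k)

/-- Density of the densest subgraph: `ρ*_G = max_{∅ ≠ S ⊆ V} ρ(S)`. -/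
noncomputable def rhoStar {V : Type*} [Fintype V] [DecidableEq V] (G : SimpleGraph V)
    [DecidableRel G.Adj] : ℝ :=
  sSup {x : ℝ | ∃ S : Finset V, S.Nonempty ∧ rho G S = x}

/-- Density of the densest subgraph at fairness level `α`:
`ρ*_G(α) = max {ρ(S) : ∅ ≠ S ⊆ V, r1(S) = α}`. -/
noncomputable def rhoStarAlpha {V : Type*} [Fintype V] [DecidableEq V] (G : SimpleGraph V)
    [DecidableRel G.Adj] (Sp : Finset V) (α : ℝ) : ℝ :=
  sSup {x : ℝ | ∃ S : Finset V, S.Nonempty ∧ r1 Sp S = α ∧ rho G S = x}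

/-- Price of fairness `PoF(G, α) = 1 - ρ*_G(α) / ρ*_G`. -/
noncomputable def PoF {V : Type*} [Fintype V] [DecidableEq V] (G : SimpleGraph V)
    [DecidableRel G.Adj] (Sp : Finset V) (α : ℝ) : ℝ :=
  1 - rhoStarAlpha G Sp α / rhoStar G

section EdgesIn

variable {V : Type*} [Fintype V] [DecidableEq V] (G : SimpleGraph V) [DecidableRel G.Adj]

lemma edgeFinset_filter_subset_image_offDiag (T : Finset V) :
    {e ∈ G.edgeFinset | ∀ v ∈ e, v ∈ T} ⊆ T.offDiag.image Sym2.mk.uncurry := by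
  intro e he
  induction e using Sym2.ind with
  | _ a b =>
    simp only [mem_filter, SimpleGraph.mem_edgeFinset, SimpleGraph.mem_edgeSet,
      Sym2.mem_iff, forall_eq_or_imp, forall_eq] at he
    exact mem_image.mpr ⟨(a, b), mem_offDiag.mpr ⟨he.2.1, he.2.2, he.1.ne⟩, rfl⟩

lemma edgeFinset_filter_eq_image_offDiag_of_isClique {T : Finset V}
    (hT : G.IsClique (T : Set V)) :
    {e ∈ G.edgeFinset | ∀ v ∈ e, v ∈ T} = T.offDiag.image Sym2.mk.uncurry := by
  refine (edgeFinset_filter_subset_image_offDiag G T).antisymm ?_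
  simp only [subset_iff, mem_image, mem_offDiag, Prod.exists, Function.uncurry_apply_pair]
  rintro _ ⟨a, b, ⟨ha, hb, hab⟩, rfl⟩
  simp only [mem_filter, SimpleGraph.mem_edgeFinset, SimpleGraph.mem_edgeSet, Sym2.mem_iff,
    forall_eq_or_imp, forall_eq]
  exact ⟨hT ha hb hab, ha, hb⟩

lemma edgesIn_le_choose_two (T : Finset V) : edgesIn G T ≤ (#T).choose 2 :=
  (card_le_card (edgeFinset_filter_subset_image_offDiag G T)).trans_eq
    (Sym2.card_image_offDiag T)

lemma edgesIn_eq_choose_two_of_isClique {T : Finset V} (hT : G.IsClique (T : Set V)) :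
    edgesIn G T = (#T).choose 2 := by
  rw [edgesIn, edgeFinset_filter_eq_image_offDiag_of_isClique G hT, Sym2.card_image_offDiag]

lemma edgesIn_eq_edgesIn_inter_add (S T : Finset V) :
    edgesIn G S = edgesIn G (S ∩ T) +
      #{e ∈ G.edgeFinset | (∀ v ∈ e, v ∈ S) ∧ ¬ ∀ v ∈ e, v ∈ T} := by
  rw [edgesIn, ← card_filter_add_card_filter_not (fun e : Sym2 V => ∀ v ∈ e, v ∈ T),
    filter_filter, filter_filter, edgesIn]
  congr 2
  ext e
  simp only [mem_filter, mem_inter, forall_and]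

lemma rho_le_iff {S : Finset V} (hS : S.Nonempty) {c : ℝ} :
    rho G S ≤ c ↔ 2 * (edgesIn G S : ℝ) ≤ c * #S :=
  div_le_iff₀ (by exact_mod_cast hS.card_pos)

lemma rho_eq_card_sub_one_of_isClique {T : Finset V} (hT : G.IsClique (T : Set V))
    (hne : T.Nonempty) : rho G T = #T - 1 := by
  have hpos : (0 : ℝ) < #T := by exact_mod_cast hne.card_pos
  rw [rho, edgesIn_eq_choose_two_of_isClique G hT, Nat.cast_choose_two]
  field_simp

end EdgesIn

lemma Sym2.sup_mem {α : Type*} [LinearOrder α] (e : Sym2 α) : e.sup ∈ e := by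
  induction e using Sym2.ind with
  | _ a b => rcases le_total a b with h | h <;> simp [h]

section Lollipop

variable {k : ℕ}

@[simp]
lemma mem_lollipopClique {v : Fin (k * k)} : v ∈ lollipopClique k ↔ v.val < k := by
  simp [lollipopClique]

lemma card_lollipopClique : #(lollipopClique k) = k := by
  rw [lollipopClique, Fin.card_filter_val_lt, min_eq_right (Nat.le_mul_self k)]

lemma isClique_lollipopClique : (lollipop k).IsClique (lollipopClique k : Set (Fin (k * k))) :=
  fun _ hu _ hv huv => ⟨huv, Or.inl ⟨mem_lollipopClique.mp hu, mem_lollipopClique.mp hv⟩⟩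

lemma lollipop_edge_eq_of_not_subset_clique {e : Sym2 (Fin (k * k))}
    (he : e ∈ (lollipop k).edgeSet) (hout : ¬ ∀ v ∈ e, v ∈ lollipopClique k) :
    k ≤ e.sup.val ∧ ∃ u : Fin (k * k), u.val + 1 = e.sup.val ∧ e = s(u, e.sup) := by
  induction e using Sym2.ind with
  | _ a b =>
    simp only [SimpleGraph.mem_edgeSet, lollipop, Sym2.mem_iff, forall_eq_or_imp, forall_eq,
      mem_lollipopClique, Sym2.sup_mk] at he hout ⊢
    rcases he.2 with h | ⟨hab, hb⟩ | ⟨hba, ha⟩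
    · exact absurd h hout
    · rw [max_eq_right (Fin.le_def.mpr (by omega))]
      exact ⟨hb, a, hab, rfl⟩
    · rw [max_eq_left (Fin.le_def.mpr (by omega))]
      exact ⟨ha, b, hba, Sym2.eq_swap⟩

lemma edgesIn_lollipop_le_edgesIn_inter_clique_add (S : Finset (Fin (k * k))) :
    edgesIn (lollipop k) S ≤
      edgesIn (lollipop k) (S ∩ lollipopClique k) + #(S \ lollipopClique k) := by
  rw [edgesIn_eq_edgesIn_inter_add _ S (lollipopClique k)]
  refine Nat.add_le_add_left ?_ _
  refine card_le_card_of_injOn Sym2.sup (fun e he => ?_) (fun e₁ he₁ e₂ he₂ heq => ?_)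
  · simp only [coe_filter, SimpleGraph.mem_edgeFinset, Set.mem_ofPred_eq] at he
    obtain ⟨hk, -⟩ := lollipop_edge_eq_of_not_subset_clique he.1 he.2.2
    simpa using ⟨he.2.1 _ (Sym2.sup_mem e), hk⟩
  · simp only [coe_filter, SimpleGraph.mem_edgeFinset, Set.mem_ofPred_eq] at he₁ he₂
    obtain ⟨-, u₁, hu₁, he₁⟩ := lollipop_edge_eq_of_not_subset_clique he₁.1 he₁.2.2
    obtain ⟨-, u₂, hu₂, he₂⟩ := lollipop_edge_eq_of_not_subset_clique he₂.1 he₂.2.2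
    rw [he₁, he₂, heq, Fin.ext (by omega : u₁.val = u₂.val)]

lemma two_mul_edgesIn_lollipop_le (hk : 3 ≤ k) (S : Finset (Fin (k * k))) :
    2 * edgesIn (lollipop k) S ≤ (k - 1) * #S := by
  have ha : #(S ∩ lollipopClique k) ≤ k :=
    (card_le_card inter_subset_right).trans_eq card_lollipopClique
  calc 2 * edgesIn (lollipop k) S
      ≤ 2 * (#(S ∩ lollipopClique k)).choose 2 + 2 * #(S \ lollipopClique k) := by
        have := edgesIn_le_choose_two (lollipop k) (S ∩ lollipopClique k)
        have := edgesIn_lollipop_le_edgesIn_inter_clique_add S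
        omega
    _ ≤ (k - 1) * #(S ∩ lollipopClique k) + (k - 1) * #(S \ lollipopClique k) := by
        rw [Nat.choose_two_right, Nat.mul_div_cancel' (Nat.even_mul_pred_self _).two_dvd,
          mul_comm]
        exact add_le_add (Nat.mul_le_mul_right _ (by omega)) (Nat.mul_le_mul_right _ (by omega))
    _ = (k - 1) * #S := by rw [← mul_add, card_inter_add_card_sdiff]

end Lollipop

theorem stmt6_general (k : ℕ) (hn : 9 < k * k) :
    (∀ S : Finset (Fin (k * k)), S.Nonempty → rho (lollipop k) S ≤ (k : ℝ) - 1) ∧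
    rho (lollipop k) (lollipopClique k) = (k : ℝ) - 1 := by
  have hk : 3 ≤ k := by nlinarith
  refine ⟨fun S hS => ?_, ?_⟩
  · rw [rho_le_iff _ hS]
    have h := two_mul_edgesIn_lollipop_le hk S
    rw [← Nat.cast_le (α := ℝ)] at h
    push_cast [Nat.cast_sub (by omega : 1 ≤ k)] at h
    exact h
  · have hne : (lollipopClique k).Nonempty := card_pos.mp (card_lollipopClique.symm ▸ by omega)
    rw [rho_eq_card_sub_one_of_isClique _ isClique_lollipopClique hne, card_lollipopClique]

/-- For a perfect square `n = k² > 9`, every nonempty vertex subset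
`S` of the lollipop graph `L_n` satisfies `ρ(S) ≤ k - 1 = √n - 1`, with equality
attained by the vertex set of the clique `C_√n`: the densest subgraph of `L_n`
is the unprotected clique and `ρ*_{L_n} = √n - 1`. -/
theorem stmt6 (k : ℕ) (hk : 2 ≤ k) (hn : 9 < k * k) :
    (∀ S : Finset (Fin (k * k)), S.Nonempty → rho (lollipop k) S ≤ (k : ℝ) - 1) ∧
    rho (lollipop k) (lollipopClique k) = (k : ℝ) - 1 :=
  stmt6_general k hn
end

section
/- For every vertex subset S ⊆ V and all real parameters β and λ, the following identity holds: Σ_{v ∈ V \ S} deg(v) + e(S, V \ S) + (β − λ)·|S ∩ Sp| + (β + λ)·(|S| − |S ∩ Sp|) = (2m − λ·np) + β·|S| − (2·e(S) − λ·(|S| + np − 2·|S ∩ Sp|)), where deg(v) denotes the degree of v in G and e(S, V \ S) denotes the number of edges with one endpoint in S and the other in V \ S. (This is the cost of the s–t cut (S ∪ {s}, (V \ S) ∪ {t}) in the auxiliary flow network for FADSG-II, and equals (2m − λ·np) + β|S| − p2(S, λ).) -/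
open Finset

/-- Number of edges of `G` with one endpoint in `S` and the other in `V \ S`. -/
def cutEdges {V : Type*} [Fintype V] [DecidableEq V] (G : SimpleGraph V)
    [DecidableRel G.Adj] (S : Finset V) : ℕ :=
  (G.edgeFinset.filter (fun e => (∃ v ∈ e, v ∈ S) ∧ (∃ v ∈ e, v ∉ S))).card

/-! Summing degrees over `S` counts every edge inside `S` twice and every cut edge once, so by
the handshake lemma `∑_{v ∉ S} deg v = 2m - 2e(S) - e(S, V \ S)`; the rest is linear in `β`, `λ`. -/

theorem Sym2.card_filter_mem {V : Type*} [Fintype V] [DecidableEq V] {e : Sym2 V}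
    (he : ¬e.IsDiag) (S : Finset V) :
    #{v ∈ S | v ∈ e} = 2 * (if ∀ v ∈ e, v ∈ S then 1 else 0)
      + if (∃ v ∈ e, v ∈ S) ∧ ∃ v ∈ e, v ∉ S then 1 else 0 := by
  induction e with
  | h u w =>
    have huw : u ≠ w := by simpa using he
    have hfilter : {v ∈ S | v ∈ s(u, w)} = {v ∈ ({u, w} : Finset V) | v ∈ S} := by
      ext; simp [and_comm]
    rw [hfilter, filter_insert, filter_singleton]
    by_cases hu : u ∈ S <;> by_cases hw : w ∈ S <;> simp [hu, hw, huw]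

namespace SimpleGraph

variable {V : Type*} [Fintype V] [DecidableEq V] (G : SimpleGraph V) [DecidableRel G.Adj]

theorem sum_degree_eq_sum_card_filter_mem (T : Finset V) :
    ∑ v ∈ T, G.degree v = ∑ e ∈ G.edgeFinset, #{v ∈ T | v ∈ e} := by
  simp_rw [← card_incidenceFinset_eq_degree, incidenceFinset_eq_filter]
  exact sum_card_bipartiteAbove_eq_sum_card_bipartiteBelow (· ∈ ·)

theorem sum_degree_eq_two_mul_edgesIn_add_cutEdges (S : Finset V) :
    ∑ v ∈ S, G.degree v = 2 * edgesIn G S + cutEdges G S := by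
  rw [sum_degree_eq_sum_card_filter_mem, edgesIn, cutEdges, card_filter, card_filter, mul_sum,
    ← sum_add_distrib]
  exact sum_congr rfl fun e he ↦
    Sym2.card_filter_mem (G.not_isDiag_of_mem_edgeSet (mem_edgeFinset.1 he)) S

theorem sum_compl_degree_add_cutEdges_add_two_mul_edgesIn (S : Finset V) :
    ∑ v ∈ Sᶜ, G.degree v + cutEdges G S + 2 * edgesIn G S = 2 * #G.edgeFinset := by
  rw [← G.sum_degrees_eq_twice_card_edges, ← sum_compl_add_sum S,
    G.sum_degree_eq_two_mul_edgesIn_add_cutEdges S]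
  ring

end SimpleGraph

/-- cost of the s–t cut `(S ∪ {s}, (V \ S) ∪ {t})` in the auxiliary
flow network for FADSG-II:
`Σ_{v ∉ S} deg(v) + e(S, V \ S) + (β - λ)|S ∩ Sp| + (β + λ)(|S| - |S ∩ Sp|)
  = (2m - λ np) + β|S| - (2 e(S) - λ(|S| + np - 2|S ∩ Sp|))
  = (2m - λ np) + β|S| - p2(S, λ)`. -/
theorem stmt11 {V : Type*} [Fintype V] [DecidableEq V] (G : SimpleGraph V)
    [DecidableRel G.Adj] (Sp S : Finset V) (β lam : ℝ) :
    (∑ v ∈ Sᶜ, (G.degree v : ℝ)) + (cutEdges G S : ℝ)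
        + (β - lam) * ((S ∩ Sp).card : ℝ)
        + (β + lam) * ((S.card : ℝ) - ((S ∩ Sp).card : ℝ)) =
      (2 * (G.edgeFinset.card : ℝ) - lam * (Sp.card : ℝ)) + β * (S.card : ℝ)
        - (2 * (edgesIn G S : ℝ)
            - lam * ((S.card : ℝ) + (Sp.card : ℝ) - 2 * ((S ∩ Sp).card : ℝ))) := by
  have h : (∑ v ∈ Sᶜ, (G.degree v : ℝ)) + cutEdges G S + 2 * edgesIn G S
      = 2 * G.edgeFinset.card := by
    exact_mod_cast G.sum_compl_degree_add_cutEdges_add_two_mul_edgesIn S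
  linear_combination h
end
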